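/- With T = L + M, R = K + M as above, R is a GCD-domain if and only if T is a GCD-domain, L is the fraction field of K, K is a GCD-domain, and T_M is a valuation domain. -/

import Mathlib

section Setup

variable {T : Type*} [CommRing T] [IsDomain T]

/-- The subring `K + M` of `T`, for a subring `K` and an ideal `M` of `T`. -/
def ringR (K : Subring T) (M : Ideal T) : Subring T where
  carrier := {t | ∃ k ∈ K, ∃ m ∈ M, t = k + m}
  one_mem' := ⟨1, K.one_mem, 0, M.zero_mem, by ring⟩
  zero_mem' := ⟨0, K.zero_mem, 0, M.zero_mem, by ring⟩
  add_mem' := by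
    rintro a b ⟨k1, hk1, m1, hm1, rfl⟩ ⟨k2, hk2, m2, hm2, rfl⟩
    exact ⟨k1 + k2, K.add_mem hk1 hk2, m1 + m2, M.add_mem hm1 hm2, by ring⟩
  neg_mem' := by
    rintro a ⟨k, hk, m, hm, rfl⟩
    exact ⟨-k, K.neg_mem hk, -m, M.neg_mem hm, by ring⟩
  mul_mem' := by
    rintro a b ⟨k1, hk1, m1, hm1, rfl⟩ ⟨k2, hk2, m2, hm2, rfl⟩
    refine ⟨k1 * k2, K.mul_mem hk1 hk2, k1 * m2 + m1 * k2 + m1 * m2, ?_, by ring⟩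
    exact M.add_mem (M.add_mem (M.mul_mem_left _ hm2) (M.mul_mem_right _ hm1))
      (M.mul_mem_left _ hm2)

theorem K_le_ringR (K : Subring T) (M : Ideal T) : K ≤ ringR K M :=
  fun k hk => ⟨k, hk, 0, M.zero_mem, (add_zero k).symm⟩

/-- An ideal `A` of `T`, viewed as a module over a subring `S` of `T`. -/
def idealAsMod (S : Subring T) (A : Ideal T) : Submodule ↥S T where
  carrier := A
  add_mem' := fun ha hb => A.add_mem ha hb
  zero_mem' := A.zero_mem
  smul_mem' := fun r a ha => A.mul_mem_left (r : T) ha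

/-- The subring `L` of `T` is a field. -/
def IsFieldSub (L : Subring T) : Prop := ∀ x ∈ L, x ≠ 0 → ∃ y ∈ L, x * y = 1

/-- `T = L ⊕ M` as additive groups: `L` is a retract of `T` with maximal ideal `M`. -/
def DirectSumDecomp (L : Subring T) (M : Ideal T) : Prop :=
  (∀ t : T, ∃ l ∈ L, ∃ m ∈ M, t = l + m) ∧ ∀ x ∈ L, x ∈ M → x = 0

/-- `L` is the field of fractions of `K` (inside `T`). -/
def IsFracOf (K L : Subring T) : Prop :=
  ∀ l ∈ L, ∃ a ∈ K, ∃ b ∈ K, b ≠ 0 ∧ l * b = a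

/-- The module structure on a subring over a smaller subring. -/
noncomputable def modOfLE {K L : Subring T} (h : K ≤ L) : Module ↥K ↥L :=
  ((Subring.inclusion h).toAlgebra).toModule

/-- `T` localized at the prime `M` is a valuation domain. -/
def ValAtPrime (M : Ideal T) (hp : M.IsPrime) : Prop :=
  @ValuationRing (@Localization.AtPrime T _ M hp) _
    (@IsLocalization.isDomain_of_local_atPrime T _ _ M hp)

/-- A Prüfer domain: every nonzero finitely generated ideal is invertible. -/
def IsPruferDomain (A : Type*) [CommRing A] [IsDomain A] : Prop :=
  ∀ I : Ideal A, I ≠ ⊥ → I.FG →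
    IsUnit (I : FractionalIdeal (nonZeroDivisors A) (FractionRing A))

/-- A GCD domain: any two nonzero elements admit a greatest common divisor. -/
def IsGCDDomain (A : Type*) [CommRing A] [IsDomain A] : Prop :=
  ∀ a b : A, a ≠ 0 → b ≠ 0 →
    ∃ g : A, g ∣ a ∧ g ∣ b ∧ ∀ c : A, c ∣ a → c ∣ b → c ∣ g

/-- The algebra structure of the fraction field of `T` over a subring of `T`. -/
noncomputable def algFrac (S : Subring T) : Algebra ↥S (FractionRing T) :=
  ((algebraMap T (FractionRing T)).comp S.subtype).toAlgebra

end Setup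

/-!
Let `π : T → L` be the projection along `M`; it is a ring map and `R = π⁻¹(K)`.

(⇒) `π` restricts to a retraction `R → K`, so `K` inherits gcds from `R`. If a gcd `g ∈ M` in `R`
of two elements of `M` had both cofactors in `M`, then `λg` would divide `g` in `R` for every
`λ ∈ Lˣ`, forcing `L = K`. Applied to `m², l m²` this writes `l ∈ L` as a quotient of elements of
`K`; applied to `m² t₁, m² t₂` it shows that `t₁ ∣ t₂` or `t₂ ∣ t₁` in `T_M`. Once `L` is the
fraction field of `K`, `T` is a localization of `R` at `K \ {0}`, hence a GCD domain.

(⇐) Write `x = d s, y = d t` in `R` with `d = gcd_T(x, y)`. As `T_M` is a valuation domain, one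
of the coprime `s, t`, say `s`, lies outside `M`. With `π t / π s = A / B` in lowest terms in `K`,
the element `d · π s / B` is a gcd of `x` and `y` in `R`.
-/

theorem isGCDDomain_iff_isGCDMonoid {A : Type*} [CommRing A] [IsDomain A] :
    IsGCDDomain A ↔ IsGCDMonoid A := by
  rw [isGCDMonoid_iff_exists_gcd]
  constructor
  · intro h
    refine ⟨inferInstance, fun a b => ?_⟩
    rcases eq_or_ne a 0 with rfl | ha
    · exact ⟨b, fun d => ⟨And.right, fun hd => ⟨dvd_zero d, hd⟩⟩⟩
    rcases eq_or_ne b 0 with rfl | hb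
    · exact ⟨a, fun d => ⟨And.left, fun hd => ⟨hd, dvd_zero d⟩⟩⟩
    obtain ⟨g, hga, hgb, hg⟩ := h a b ha hb
    exact ⟨g, fun d => ⟨fun hd => hg d hd.1 hd.2, fun hd => ⟨hd.trans hga, hd.trans hgb⟩⟩⟩
  · rintro ⟨-, h⟩ a b - -
    obtain ⟨g, hg⟩ := h a b
    exact ⟨g, ((hg g).2 dvd_rfl).1, ((hg g).2 dvd_rfl).2, fun c hca hcb => (hg c).1 ⟨hca, hcb⟩⟩

theorem IsGCDMonoid.of_leftInverse {A B : Type*} [CommMonoidWithZero A] [IsCancelMulZero A]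
    [CommMonoidWithZero B] [IsGCDMonoid B] (i : A →* B) (r : B →* A)
    (h : Function.LeftInverse r i) : IsGCDMonoid A := by
  obtain ⟨_⟩ := ‹IsGCDMonoid B›
  refine isGCDMonoid_iff_exists_gcd.mpr
    ⟨inferInstance, fun a b => ⟨r (gcd (i a) (i b)), fun d => ⟨fun hd => ?_, fun hd => ?_⟩⟩⟩
  · rw [← h d]
    exact map_dvd r (dvd_gcd (map_dvd i hd.1) (map_dvd i hd.2))
  · rw [← h a, ← h b]
    exact ⟨hd.trans (map_dvd r (gcd_dvd_left _ _)), hd.trans (map_dvd r (gcd_dvd_right _ _))⟩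

theorem exists_isRelPrime_cofactors {A : Type*} [CommMonoidWithZero A] [IsGCDMonoid A]
    (x y : A) :
    ∃ d s t, x = d * s ∧ y = d * t ∧ IsRelPrime s t ∧ ∀ c, c ∣ x → c ∣ y → c ∣ d := by
  obtain ⟨_⟩ := ‹IsGCDMonoid A›
  obtain ⟨s, t, hs, ht, hst⟩ := extract_gcd x y
  exact ⟨gcd x y, s, t, hs, ht, gcd_isUnit_iff_isRelPrime.mp hst, fun c => dvd_gcd⟩

theorem isGCDMonoid_of_forall_isUnit_mul_mem {T : Type*} [CommRing T] [IsDomain T]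
    (S : Subring T) [IsGCDMonoid S] (h : ∀ t : T, ∃ b ∈ S, IsUnit b ∧ b * t ∈ S) :
    IsGCDMonoid T := by
  obtain ⟨_⟩ := ‹IsGCDMonoid S›
  have hpair : ∀ t₁ t₂ : T, ∃ b ∈ S, IsUnit b ∧ b * t₁ ∈ S ∧ b * t₂ ∈ S := by
    intro t₁ t₂
    obtain ⟨b₁, hb₁S, hb₁, h₁⟩ := h t₁
    obtain ⟨b₂, hb₂S, hb₂, h₂⟩ := h t₂
    refine ⟨b₁ * b₂, S.mul_mem hb₁S hb₂S, hb₁.mul hb₂, ?_, ?_⟩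
    · simpa only [mul_right_comm] using S.mul_mem h₁ hb₂S
    · simpa only [mul_assoc] using S.mul_mem hb₁S h₂
  refine isGCDMonoid_iff_exists_gcd.mpr ⟨inferInstance, fun t₁ t₂ => ?_⟩
  obtain ⟨b, hbS, hb, h₁, h₂⟩ := hpair t₁ t₂
  let g := gcd (⟨b * t₁, h₁⟩ : S) ⟨b * t₂, h₂⟩
  refine ⟨g, fun c => ⟨fun ⟨hc₁, hc₂⟩ => ?_, fun hc => ?_⟩⟩
  · obtain ⟨q₁, rfl⟩ := hc₁
    obtain ⟨q₂, rfl⟩ := hc₂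
    obtain ⟨β, hβS, hβ, hβc⟩ := h c
    obtain ⟨γ, hγS, hγ, hγ₁, hγ₂⟩ := hpair q₁ q₂
    let k : S := ⟨β * γ, S.mul_mem hβS hγS⟩
    have hdvd : (⟨β * c, hβc⟩ : S) ∣ k * g := by
      refine (dvd_gcd ?_ ?_).trans (gcd_mul_left' k _ _).dvd
      · exact ⟨⟨b * (γ * q₁), S.mul_mem hbS hγ₁⟩, Subtype.ext (by simp only [k]; push_cast; ring)⟩
      · exact ⟨⟨b * (γ * q₂), S.mul_mem hbS hγ₂⟩, Subtype.ext (by simp only [k]; push_cast; ring)⟩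
    have := map_dvd S.subtype hdvd
    simp only [Subring.coe_subtype, Subring.coe_mul, k] at this
    exact (hβ.mul hγ).dvd_mul_left.mp ((dvd_mul_left c β).trans this)
  · exact ⟨hb.dvd_mul_left.mp (hc.trans (map_dvd S.subtype (gcd_dvd_left _ _))),
      hb.dvd_mul_left.mp (hc.trans (map_dvd S.subtype (gcd_dvd_right _ _)))⟩

section Decomposition

variable {T : Type*} [CommRing T] {L K : Subring T} {M : Ideal T}

theorem mem_ringR_of_mem {m : T} (hm : m ∈ M) : m ∈ ringR K M :=
  ⟨0, K.zero_mem, m, hm, (zero_add m).symm⟩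

namespace DirectSumDecomp

noncomputable def projFun (hLM : DirectSumDecomp L M) (t : T) : T := (hLM.1 t).choose

theorem projFun_mem (hLM : DirectSumDecomp L M) (t : T) : hLM.projFun t ∈ L :=
  (hLM.1 t).choose_spec.1

theorem sub_projFun_mem (hLM : DirectSumDecomp L M) (t : T) : t - hLM.projFun t ∈ M := by
  obtain ⟨m, hm, ht⟩ := (hLM.1 t).choose_spec.2
  have hsub : t - hLM.projFun t = m := by unfold projFun; linear_combination ht
  rwa [hsub]

theorem projFun_eq (hLM : DirectSumDecomp L M) {t l : T} (hl : l ∈ L) (hm : t - l ∈ M) :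
    hLM.projFun t = l := by
  refine sub_eq_zero.mp (hLM.2 _ (L.sub_mem (hLM.projFun_mem t) hl) ?_)
  rw [show hLM.projFun t - l = (t - l) - (t - hLM.projFun t) by ring]
  exact M.sub_mem hm (hLM.sub_projFun_mem t)

noncomputable def proj (hLM : DirectSumDecomp L M) : T →+* T where
  toFun := hLM.projFun
  map_one' := hLM.projFun_eq L.one_mem (by rw [sub_self]; exact M.zero_mem)
  map_zero' := hLM.projFun_eq L.zero_mem (by rw [sub_self]; exact M.zero_mem)
  map_mul' x y := by
    refine hLM.projFun_eq (L.mul_mem (hLM.projFun_mem x) (hLM.projFun_mem y)) ?_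
    rw [show x * y - hLM.projFun x * hLM.projFun y =
      (x - hLM.projFun x) * y + hLM.projFun x * (y - hLM.projFun y) by ring]
    exact M.add_mem (M.mul_mem_right _ (hLM.sub_projFun_mem x))
      (M.mul_mem_left _ (hLM.sub_projFun_mem y))
  map_add' x y := by
    refine hLM.projFun_eq (L.add_mem (hLM.projFun_mem x) (hLM.projFun_mem y)) ?_
    rw [show x + y - (hLM.projFun x + hLM.projFun y) =
      (x - hLM.projFun x) + (y - hLM.projFun y) by ring]
    exact M.add_mem (hLM.sub_projFun_mem x) (hLM.sub_projFun_mem y)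

theorem proj_mem (hLM : DirectSumDecomp L M) (t : T) : hLM.proj t ∈ L :=
  hLM.projFun_mem t

theorem proj_of_mem (hLM : DirectSumDecomp L M) {l : T} (hl : l ∈ L) : hLM.proj l = l :=
  hLM.projFun_eq hl (by rw [sub_self]; exact M.zero_mem)

theorem proj_eq_zero_iff (hLM : DirectSumDecomp L M) {t : T} : hLM.proj t = 0 ↔ t ∈ M := by
  refine ⟨fun h => ?_, fun h => hLM.projFun_eq L.zero_mem (by rwa [sub_zero])⟩
  have hsub := hLM.sub_projFun_mem t
  rwa [show hLM.projFun t = 0 from h, sub_zero] at hsub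

theorem mem_ringR_iff (hLM : DirectSumDecomp L M) (hKL : K ≤ L) {t : T} :
    t ∈ ringR K M ↔ hLM.proj t ∈ K := by
  constructor
  · rintro ⟨k, hk, m, hm, rfl⟩
    rwa [map_add, hLM.proj_of_mem (hKL hk), (hLM.proj_eq_zero_iff).mpr hm, add_zero]
  · intro h
    exact ⟨hLM.proj t, h, t - hLM.proj t, hLM.sub_projFun_mem t, by ring⟩

end DirectSumDecomp

end Decomposition

section Localization

variable {T : Type*} [CommRing T] [IsDomain T]

theorem algebraMap_atPrime_dvd_iff (P : Ideal T) [P.IsPrime] (a b : T) :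
    algebraMap T (Localization.AtPrime P) a ∣ algebraMap T (Localization.AtPrime P) b ↔
      ∃ u ∉ P, ∃ v, a * v = b * u := by
  constructor
  · rintro ⟨c, hc⟩
    obtain ⟨⟨v, u⟩, hvu⟩ := IsLocalization.surj P.primeCompl c
    refine ⟨u, u.2, v, IsLocalization.injective (Localization.AtPrime P)
      P.primeCompl_le_nonZeroDivisors ?_⟩
    rw [map_mul, map_mul, ← hvu, hc]
    ring
  · rintro ⟨u, hu, v, h⟩
    have hu' := IsLocalization.map_units (Localization.AtPrime P) (⟨u, hu⟩ : P.primeCompl)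
    refine hu'.dvd_mul_right.mp ⟨algebraMap T _ v, ?_⟩
    rw [← map_mul, ← map_mul, h]

theorem valAtPrime_iff (P : Ideal T) (hP : P.IsPrime) :
    ValAtPrime P hP ↔ ∀ a b : T, a ≠ 0 → ∃ u v, a * v = b * u ∧ (u ∉ P ∨ v ∉ P) := by
  have : IsDomain (Localization.AtPrime P) := IsLocalization.isDomain_of_local_atPrime hP
  set f := algebraMap T (Localization.AtPrime P)
  unfold ValAtPrime
  rw [ValuationRing.iff_dvd_total]
  constructor
  · intro h a b _
    rcases h.total (f a) (f b) with hab | hba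
    · obtain ⟨u, hu, v, huv⟩ := (algebraMap_atPrime_dvd_iff P a b).mp hab
      exact ⟨u, v, huv, Or.inl hu⟩
    · obtain ⟨v, hv, u, huv⟩ := (algebraMap_atPrime_dvd_iff P b a).mp hba
      exact ⟨u, v, huv.symm, Or.inr hv⟩
  · intro h
    have hassoc (x : Localization.AtPrime P) : ∃ a : T, Associated x (f a) := by
      obtain ⟨⟨a, s⟩, hs⟩ := IsLocalization.surj P.primeCompl x
      exact ⟨a, ⟨(IsLocalization.map_units _ s).unit, hs⟩⟩
    refine ⟨fun x y => ?_⟩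
    obtain ⟨a, hxa⟩ := hassoc x
    obtain ⟨b, hyb⟩ := hassoc y
    rw [hxa.dvd_iff_dvd_left, hxa.dvd_iff_dvd_right, hyb.dvd_iff_dvd_left, hyb.dvd_iff_dvd_right]
    rcases eq_or_ne a 0 with rfl | ha
    · exact Or.inr (by rw [map_zero]; exact dvd_zero _)
    obtain ⟨u, v, huv, hu | hv⟩ := h a b ha
    · exact Or.inl ((algebraMap_atPrime_dvd_iff P a b).mpr ⟨u, hu, v, huv⟩)
    · exact Or.inr ((algebraMap_atPrime_dvd_iff P b a).mpr ⟨v, hv, u, huv.symm⟩)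

theorem notMem_or_notMem_of_isRelPrime [DecompositionMonoid T] {P : Ideal T} {hP : P.IsPrime}
    (hval : ValAtPrime P hP) {s t : T} (hs : s ≠ 0) (ht : t ≠ 0) (hst : IsRelPrime s t) :
    s ∉ P ∨ t ∉ P := by
  obtain ⟨u, v, huv, hu | hv⟩ := (valAtPrime_iff P hP).mp hval s t hs
  · obtain ⟨w, rfl⟩ := hst.symm.dvd_of_dvd_mul_left ⟨u, huv⟩
    have hsu : u = s * w := mul_left_cancel₀ ht (by linear_combination -huv)
    exact Or.inl fun hsP => hu (hsu ▸ P.mul_mem_right w hsP)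
  · obtain ⟨w, rfl⟩ := hst.dvd_of_dvd_mul_left ⟨v, huv.symm⟩
    have htv : v = t * w := mul_left_cancel₀ hs (by linear_combination huv)
    exact Or.inr fun htP => hv (htv ▸ P.mul_mem_right w htP)

end Localization

theorem IsFieldSub.isUnit {T : Type*} [CommRing T] {L : Subring T} (hL : IsFieldSub L) {x : T}
    (hx : x ∈ L) (hx0 : x ≠ 0) : IsUnit x :=
  let ⟨_, _, h⟩ := hL x hx hx0
  IsUnit.of_mul_eq_one _ h

section GCDOfRingR

variable {T : Type*} [CommRing T] [IsDomain T] {L K : Subring T} {M : Ideal T}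

theorem isGCDMonoid_of_isGCDMonoid_ringR (hLM : DirectSumDecomp L M) (hKL : K ≤ L)
    [IsGCDMonoid (ringR K M)] : IsGCDMonoid K :=
  IsGCDMonoid.of_leftInverse (Subring.inclusion (K_le_ringR K M)).toMonoidHom
    (hLM.proj.restrict _ _ fun _ => (hLM.mem_ringR_iff hKL).mp).toMonoidHom
    fun k => Subtype.ext (hLM.proj_of_mem (hKL k.2))

theorem isGCDMonoid_of_isGCDMonoid_ringR_of_isFracOf (hL : IsFieldSub L)
    (hLM : DirectSumDecomp L M) (hKL : K ≤ L) (hfrac : IsFracOf K L)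
    [IsGCDMonoid (ringR K M)] : IsGCDMonoid T := by
  refine isGCDMonoid_of_forall_isUnit_mul_mem (ringR K M) fun t => ?_
  obtain ⟨a, ha, b, hb, hb0, hab⟩ := hfrac _ (hLM.proj_mem t)
  refine ⟨b, K_le_ringR K M hb, hL.isUnit (hKL hb) hb0, (hLM.mem_ringR_iff hKL).mpr ?_⟩
  rwa [map_mul, hLM.proj_of_mem (hKL hb), mul_comm, hab]

theorem exists_gcd_cofactor_notMem (hL : IsFieldSub L) (hLM : DirectSumDecomp L M)
    (hKL : K ≤ L) (hKne : K ≠ L) [IsGCDMonoid (ringR K M)] {m a b : T} (hm : m ∈ M)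
    (ha : a ∈ M) (hb : b ∈ M) (hma : m * a ≠ 0) :
    ∃ g u v, u ∈ ringR K M ∧ v ∈ ringR K M ∧ m * a = g * u ∧ m * b = g * v ∧
      (u ∉ M ∨ v ∉ M) := by
  obtain ⟨_⟩ := ‹IsGCDMonoid (ringR K M)›
  let x : ringR K M := ⟨m * a, mem_ringR_of_mem (M.mul_mem_left m ha)⟩
  let y : ringR K M := ⟨m * b, mem_ringR_of_mem (M.mul_mem_left m hb)⟩
  set g := gcd x y
  obtain ⟨u, hu⟩ := gcd_dvd_left x y
  obtain ⟨v, hv⟩ := gcd_dvd_right x y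
  have hxu : m * a = g * u := congrArg Subtype.val hu
  have hyv : m * b = g * v := congrArg Subtype.val hv
  refine ⟨g, u, v, u.2, v.2, hxu, hyv, ?_⟩
  by_contra! huv
  have hg0 : (g : T) ≠ 0 := fun h => hma (by rw [hxu, h, zero_mul])
  have hgM : (g : T) ∈ M := by
    obtain ⟨w, hw⟩ : (⟨m, mem_ringR_of_mem hm⟩ : ringR K M) ∣ g :=
      dvd_gcd ⟨⟨a, mem_ringR_of_mem ha⟩, rfl⟩ ⟨⟨b, mem_ringR_of_mem hb⟩, rfl⟩
    rw [show (g : T) = m * w from congrArg Subtype.val hw]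
    exact M.mul_mem_right _ hm
  refine hKne (le_antisymm hKL fun l hl => ?_)
  rcases eq_or_ne l 0 with rfl | hl0
  · exact K.zero_mem
  obtain ⟨l', -, hll'⟩ := hL l hl hl0
  let c : ringR K M := ⟨l' * g, mem_ringR_of_mem (M.mul_mem_left l' hgM)⟩
  have hcx : c ∣ x := ⟨⟨l * u, mem_ringR_of_mem (M.mul_mem_left l huv.1)⟩,
    Subtype.ext (by simp only [c, x, Subring.coe_mul]; linear_combination hxu - g * u * hll')⟩
  have hcy : c ∣ y := ⟨⟨l * v, mem_ringR_of_mem (M.mul_mem_left l huv.2)⟩,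
    Subtype.ext (by simp only [c, y, Subring.coe_mul]; linear_combination hyv - g * v * hll')⟩
  obtain ⟨w, hw⟩ := dvd_gcd hcx hcy
  have hgw : (g : T) = l' * g * w := congrArg Subtype.val hw
  have hl'w : l' * w = 1 := mul_left_cancel₀ hg0 (by linear_combination -hgw)
  have hwl : (w : T) = l := by linear_combination l * hl'w - w * hll'
  have hwK := (hLM.mem_ringR_iff hKL).mp w.2
  rwa [hwl, hLM.proj_of_mem hl] at hwK

theorem isFracOf_of_isGCDMonoid_ringR (hL : IsFieldSub L) (hM0 : M ≠ ⊥)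
    (hLM : DirectSumDecomp L M) (hKL : K ≤ L) (hKne : K ≠ L) [IsGCDMonoid (ringR K M)] :
    IsFracOf K L := by
  intro l hl
  obtain ⟨m, hm, hm0⟩ := Submodule.exists_mem_ne_zero_of_ne_bot hM0
  obtain ⟨g, u, v, huR, hvR, hu, hv, huv⟩ := exists_gcd_cofactor_notMem hL hLM hKL hKne
    hm hm (M.mul_mem_left l hm) (mul_ne_zero hm0 hm0)
  have hg0 : g ≠ 0 := by rintro rfl; exact mul_ne_zero hm0 hm0 (by rw [hu, zero_mul])
  have hvu : v = l * u := mul_left_cancel₀ hg0 (by linear_combination l * hu - hv)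
  have hpu : hLM.proj u ≠ 0 := by
    intro h
    rcases huv with hu' | hv'
    · exact hu' (hLM.proj_eq_zero_iff.mp h)
    · exact hv' (hLM.proj_eq_zero_iff.mp (by rw [hvu, map_mul, h, mul_zero]))
  refine ⟨hLM.proj v, (hLM.mem_ringR_iff hKL).mp hvR, hLM.proj u,
    (hLM.mem_ringR_iff hKL).mp huR, hpu, ?_⟩
  rw [hvu, map_mul, hLM.proj_of_mem hl]

theorem valAtPrime_of_isGCDMonoid_ringR (hL : IsFieldSub L) (hM0 : M ≠ ⊥)
    (hLM : DirectSumDecomp L M) (hKL : K ≤ L) (hKne : K ≠ L) (hP : M.IsPrime)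
    [IsGCDMonoid (ringR K M)] : ValAtPrime M hP := by
  refine (valAtPrime_iff M hP).mpr fun t₁ t₂ ht₁ => ?_
  obtain ⟨m, hm, hm0⟩ := Submodule.exists_mem_ne_zero_of_ne_bot hM0
  obtain ⟨g, u, v, -, -, hu, hv, huv⟩ := exists_gcd_cofactor_notMem hL hLM hKL hKne hm
    (M.mul_mem_right t₁ hm) (M.mul_mem_right t₂ hm) (mul_ne_zero hm0 (mul_ne_zero hm0 ht₁))
  exact ⟨u, v, mul_left_cancel₀ (mul_ne_zero hm0 hm0) (by linear_combination v * hu - u * hv), huv⟩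

end GCDOfRingR

section RingRIsGCD

variable {T : Type*} [CommRing T] [IsDomain T] {L K : Subring T} {M : Ideal T}

theorem exists_fractional_gcd (hL : IsFieldSub L) (hKL : K ≤ L) (hfrac : IsFracOf K L)
    [IsGCDMonoid K] {a b : T} (ha : a ∈ L) (hb : b ∈ L) (ha0 : a ≠ 0) :
    ∃ ρ ∈ L, ∃ ρ' ∈ L, ρ * ρ' = 1 ∧ ρ' * a ∈ K ∧ ρ' * b ∈ K ∧
      ∀ l : T, l * a ∈ K → l * b ∈ K → l * ρ ∈ K := by
  obtain ⟨a', ha', haa'⟩ := hL a ha ha0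
  obtain ⟨p, hp, q, hq, hq0, hpq⟩ := hfrac (b * a') (L.mul_mem hb ha')
  obtain ⟨_⟩ := ‹IsGCDMonoid K›
  obtain ⟨A, B, hpA, hqB, hAB⟩ := extract_gcd (⟨p, hp⟩ : K) ⟨q, hq⟩
  set G := gcd (⟨p, hp⟩ : K) ⟨q, hq⟩
  have hpA' : p = G * A := congrArg Subtype.val hpA
  have hqB' : q = G * B := congrArg Subtype.val hqB
  have hG0 : (G : T) ≠ 0 := fun h => hq0 (by rw [hqB', h, zero_mul])
  have hB0 : (B : T) ≠ 0 := fun h => hq0 (by rw [hqB', h, mul_zero])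
  have hbA : b * a' * B = A :=
    mul_left_cancel₀ hG0 (by linear_combination hpq - b * a' * hqB' + hpA')
  obtain ⟨B', hB', hBB'⟩ := hL B (hKL B.2) hB0
  refine ⟨a * B', L.mul_mem ha hB', a' * B, L.mul_mem ha' (hKL B.2),
    by linear_combination B * B' * haa' + hBB', ?_, ?_, fun l hla hlb => ?_⟩
  · rw [show a' * B * a = B by linear_combination B * haa']
    exact B.2
  · rw [show a' * B * b = A by linear_combination hbA]
    exact A.2
  · have hdvd : B ∣ A * ⟨l * a, hla⟩ := ⟨⟨l * b, hlb⟩, Subtype.ext (by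
      simp only [Subring.coe_mul]
      linear_combination -(l * a) * hbA + B * l * b * haa')⟩
    obtain ⟨κ, hκ⟩ := (gcd_isUnit_iff_isRelPrime.mp hAB).symm.dvd_of_dvd_mul_left hdvd
    have hlaκ : l * a = B * κ := congrArg Subtype.val hκ
    rw [show l * (a * B') = κ by linear_combination B' * hlaκ + κ * hBB']
    exact κ.2

theorem exists_gcd_ringR_of_proj_ne_zero (hL : IsFieldSub L) (hLM : DirectSumDecomp L M)
    (hKL : K ≤ L) (hfrac : IsFracOf K L) [IsGCDMonoid K] {x y : ringR K M} (hx0 : x ≠ 0)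
    {d s t : T} (hxd : (x : T) = d * s) (hyd : (y : T) = d * t)
    (hd : ∀ c, c ∣ (x : T) → c ∣ (y : T) → c ∣ d) (hs : hLM.proj s ≠ 0) :
    ∃ g : ringR K M, g ∣ x ∧ g ∣ y ∧ ∀ c, c ∣ x → c ∣ y → c ∣ g := by
  obtain ⟨ρ, hρ, ρ', hρ', hρρ', hsK, htK, hK⟩ :=
    exists_fractional_gcd hL hKL hfrac (hLM.proj_mem s) (hLM.proj_mem t) hs
  have hρ_mem : ∀ e, e * s ∈ ringR K M → e * t ∈ ringR K M → e * ρ ∈ ringR K M := by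
    intro e hes het
    rw [hLM.mem_ringR_iff hKL, map_mul] at hes het ⊢
    rw [hLM.proj_of_mem hρ]
    exact hK _ hes het
  have hsR : ρ' * s ∈ ringR K M := by
    rwa [hLM.mem_ringR_iff hKL, map_mul, hLM.proj_of_mem hρ']
  have htR : ρ' * t ∈ ringR K M := by
    rwa [hLM.mem_ringR_iff hKL, map_mul, hLM.proj_of_mem hρ']
  refine ⟨⟨d * ρ, hρ_mem d (hxd ▸ x.2) (hyd ▸ y.2)⟩,
    ⟨⟨ρ' * s, hsR⟩, Subtype.ext ?_⟩, ⟨⟨ρ' * t, htR⟩, Subtype.ext ?_⟩, ?_⟩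
  · simp only [Subring.coe_mul]
    linear_combination hxd - d * s * hρρ'
  · simp only [Subring.coe_mul]
    linear_combination hyd - d * t * hρρ'
  · rintro c ⟨w₁, hw₁⟩ ⟨w₂, hw₂⟩
    have hxw₁ : (x : T) = c * w₁ := congrArg Subtype.val hw₁
    have hyw₂ : (y : T) = c * w₂ := congrArg Subtype.val hw₂
    have hc0 : (c : T) ≠ 0 := fun h => hx0 (Subtype.ext (by rw [hxw₁, h, zero_mul]; rfl))
    obtain ⟨e, hde⟩ := hd c ⟨w₁, hxw₁⟩ ⟨w₂, hyw₂⟩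
    have hes : e * s = w₁ := mul_left_cancel₀ hc0 (by linear_combination hxw₁ - hxd - s * hde)
    have het : e * t = w₂ := mul_left_cancel₀ hc0 (by linear_combination hyw₂ - hyd - t * hde)
    exact ⟨⟨e * ρ, hρ_mem e (hes ▸ w₁.2) (het ▸ w₂.2)⟩, Subtype.ext (by
      simp only [Subring.coe_mul]
      rw [hde]
      ring)⟩

theorem isGCDDomain_ringR (hL : IsFieldSub L) (hP : M.IsPrime) (hLM : DirectSumDecomp L M)
    (hKL : K ≤ L) (hfrac : IsFracOf K L) [IsGCDMonoid T] [IsGCDMonoid K]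
    (hval : ValAtPrime M hP) : IsGCDDomain (ringR K M) := by
  intro x y hx hy
  have hx' : (x : T) ≠ 0 := fun h => hx (Subtype.ext h)
  have hy' : (y : T) ≠ 0 := fun h => hy (Subtype.ext h)
  obtain ⟨d, s, t, hxd, hyd, hst, hd⟩ := exists_isRelPrime_cofactors (x : T) y
  have hs0 : s ≠ 0 := by rintro rfl; exact hx' (by rw [hxd, mul_zero])
  have ht0 : t ≠ 0 := by rintro rfl; exact hy' (by rw [hyd, mul_zero])
  rcases notMem_or_notMem_of_isRelPrime hval hs0 ht0 hst with hs | ht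
  · exact exists_gcd_ringR_of_proj_ne_zero hL hLM hKL hfrac hx hxd hyd hd
      (mt hLM.proj_eq_zero_iff.mp hs)
  · obtain ⟨g, hgy, hgx, hg⟩ := exists_gcd_ringR_of_proj_ne_zero hL hLM hKL hfrac hy hyd hxd
      (fun c h₁ h₂ => hd c h₂ h₁) (mt hLM.proj_eq_zero_iff.mp ht)
    exact ⟨g, hgx, hgy, fun c h₁ h₂ => hg c h₂ h₁⟩

end RingRIsGCD

theorem stmt_18 {T : Type*} [CommRing T] [IsDomain T]
    (L : Subring T) (M : Ideal T) (K : Subring T)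
    (hL : IsFieldSub L) (hM : M.IsMaximal) (hM0 : M ≠ ⊥)
    (hLM : DirectSumDecomp L M) (hKL : K ≤ L) (hKne : K ≠ L) :
    IsGCDDomain ↥(ringR K M) ↔
      (IsGCDDomain T ∧ IsFracOf K L ∧ IsGCDDomain ↥K ∧ ValAtPrime M hM.isPrime) := by
  simp only [isGCDDomain_iff_isGCDMonoid]
  constructor
  · intro hR
    have hfrac := isFracOf_of_isGCDMonoid_ringR hL hM0 hLM hKL hKne
    exact ⟨isGCDMonoid_of_isGCDMonoid_ringR_of_isFracOf hL hLM hKL hfrac, hfrac,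
      isGCDMonoid_of_isGCDMonoid_ringR hLM hKL,
      valAtPrime_of_isGCDMonoid_ringR hL hM0 hLM hKL hKne hM.isPrime⟩
  · rintro ⟨hT, hfrac, hK, hval⟩
    exact isGCDDomain_iff_isGCDMonoid.mp (isGCDDomain_ringR hL hM.isPrime hLM hKL hfrac hval)
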